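/- Let κ ∈ (0,1) and let φ : ℝ → ℝ be twice differentiable with φ(0) = 0 and (deriv φ u) · F(1/3, 2/3; 1/2; κ² sin²(φ u)) = 1 for all real u. Let u be a real number with deriv φ u ≠ 1, and set d = deriv φ u, d' = deriv (deriv φ) u, p = (4/9)κ²/(1 − d) − 1/3 and q = (4/9)κ² · d'/(1 − d)². Then q² = 4p³ − g₂ p − g₃, where g₂ = (4/27)(9 − 8κ²) and g₃ = (8/729)(8κ⁴ − 36κ² + 27). -/

import Mathlib

open Real


noncomputable def hc (n : ℕ) : ℝ :=
  (ascPochhammer ℝ n).eval (1/3) * (ascPochhammer ℝ n).eval (2/3) /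
    ((ascPochhammer ℝ n).eval (1/2) * (n.factorial : ℝ))

lemma poch_pos {a : ℝ} (ha : 0 < a) (n : ℕ) : 0 < (ascPochhammer ℝ n).eval a := by
  induction n with
  | zero => simp
  | succ n ih =>
    rw [ascPochhammer_succ_eval]
    exact mul_pos ih (by positivity)

lemma hc_pos (n : ℕ) : 0 < hc n := by
  unfold hc
  have h1 := poch_pos (by norm_num : (0:ℝ) < 1/3) n
  have h2 := poch_pos (by norm_num : (0:ℝ) < 2/3) n
  have h3 := poch_pos (by norm_num : (0:ℝ) < 1/2) n
  have h4 : (0:ℝ) < n.factorial := by exact_mod_cast n.factorial_pos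
  positivity

lemma hc_zero : hc 0 = 1 := by
  unfold hc; simp

lemma hc_rec (n : ℕ) :
    hc (n+1) * (((n:ℝ)+1) * ((n:ℝ)+1/2)) = hc n * (((n:ℝ)+1/3) * ((n:ℝ)+2/3)) := by
  unfold hc
  have h3 := (poch_pos (by norm_num : (0:ℝ) < 1/2) n).ne'
  have h4 : ((n.factorial : ℝ)) ≠ 0 := by exact_mod_cast n.factorial_pos.ne'
  rw [ascPochhammer_succ_eval, ascPochhammer_succ_eval, ascPochhammer_succ_eval,
    Nat.factorial_succ]
  push_cast
  field_simp
  ring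

lemma hc_le_one (n : ℕ) : hc n ≤ 1 := by
  induction n with
  | zero => rw [hc_zero]
  | succ n ih =>
    have hrec := hc_rec n
    have hpos : (0:ℝ) < ((n:ℝ)+1) * ((n:ℝ)+1/2) := by positivity
    have : hc (n+1) ≤ hc n := by
      rw [← mul_le_mul_iff_of_pos_right hpos, hrec]
      have := (hc_pos n).le
      nlinarith [hc_pos n]
    linarith

lemma summable_shift (k : ℕ) {r : ℝ} (hr0 : 0 < r) (hr : r < 1) :
    Summable (fun n : ℕ => ((n:ℝ)+1)^k * r^n) := by
  have h : Summable (fun n : ℕ => (n:ℝ)^k * r^n) :=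
    summable_pow_mul_geometric_of_norm_lt_one k (by rw [Real.norm_eq_abs, abs_of_pos hr0]; exact hr)
  have h2 : Summable (fun n : ℕ => ((n+1:ℕ):ℝ)^k * r^(n+1)) := (summable_nat_add_iff 1).2 h
  have h3 : Summable (fun n : ℕ => r⁻¹ * (((n+1:ℕ):ℝ)^k * r^(n+1))) := h2.mul_left _
  refine h3.congr fun n => ?_
  push_cast
  field_simp
  ring

lemma summable_coeff {b : ℕ → ℝ} {C : ℝ} {k : ℕ} (hb : ∀ n, |b n| ≤ C * ((n:ℝ)+1)^k)
    {x : ℝ} (hx : |x| < 1) : Summable (fun n : ℕ => b n * x ^ n) := by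
  rcases eq_or_lt_of_le (abs_nonneg x) with h0 | h0
  · have hx0 : x = 0 := by simpa [eq_comm, abs_eq_zero] using h0.symm
    apply summable_of_ne_finset_zero (s := {0})
    intro n hn
    simp only [Finset.mem_singleton] at hn
    simp [hx0, zero_pow hn]
  · refine Summable.of_norm_bounded (g := fun n : ℕ => C * (((n:ℝ)+1)^k * |x|^n)) ?_ ?_
    · exact ((summable_shift k h0 hx).mul_left C).congr fun n => by ring
    · intro n
      rw [Real.norm_eq_abs, abs_mul, abs_pow]
      calc |b n| * |x| ^ n ≤ (C * ((n:ℝ)+1)^k) * |x| ^ n :=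
            mul_le_mul_of_nonneg_right (hb n) (by positivity)
        _ = C * (((n:ℝ)+1)^k * |x|^n) := by ring

lemma hasDerivAt_powser {b : ℕ → ℝ} {C : ℝ} {k : ℕ} (hb : ∀ n, |b n| ≤ C * ((n:ℝ)+1)^k)
    {x : ℝ} (hx : |x| < 1) :
    HasDerivAt (fun y => ∑' n : ℕ, b n * y ^ n) (∑' n : ℕ, (b (n+1) * ((n:ℝ)+1)) * x ^ n) x := by
  set r : ℝ := (1 + |x|) / 2 with hr
  have hr0 : 0 < r := by positivity
  have hr1 : r < 1 := by rw [hr]; linarith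
  have hxr : |x| < r := by rw [hr]; linarith
  have hCnn : 0 ≤ C := le_trans (abs_nonneg _) (by simpa using hb 0)
  have hu : Summable (fun n : ℕ => (C * r⁻¹) * (((n:ℝ)+1)^(k+1) * r^n)) :=
    (summable_shift (k+1) hr0 hr1).mul_left _
  have hmain : HasDerivAt (fun y => ∑' n : ℕ, b n * y ^ n)
      (∑' n : ℕ, b n * ((n:ℝ) * x ^ (n-1))) x := by
    refine hasDerivAt_tsum_of_isPreconnected (y₀ := 0) hu (isOpen_Ioo (a := -r) (b := r))
      (isPreconnected_Ioo)
      (fun n y _ => ((hasDerivAt_pow n y).const_mul (b n)))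
      (fun n y hy => ?_) ?_ ?_ ?_
    · have hyr : |y| ≤ r := le_of_lt (abs_lt.2 ⟨hy.1, hy.2⟩)
      rw [Real.norm_eq_abs, abs_mul, abs_mul, abs_pow, Nat.abs_cast]
      have h1 : |y| ^ (n-1) ≤ r ^ (n-1) := pow_le_pow_left₀ (abs_nonneg y) hyr _
      have h2 : ((n:ℝ)+1)^k * ((n:ℝ) * r ^ (n-1)) ≤ ((n:ℝ)+1)^(k+1) * r^n * r⁻¹ := by
        rcases Nat.eq_zero_or_pos n with h | h
        · subst h; simp; positivity
        · obtain ⟨m, rfl⟩ := Nat.exists_eq_add_of_le h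
          simp only [Nat.add_sub_cancel_left] at *
          have hrr : r * r⁻¹ = 1 := mul_inv_cancel₀ hr0.ne'
          have hmono : ((1+m:ℕ):ℝ) ≤ (((1+m:ℕ):ℝ)+1)^1 := by push_cast; nlinarith
          have key : (((1+m:ℕ):ℝ)+1)^k * ((1+m:ℕ):ℝ) ≤ (((1+m:ℕ):ℝ)+1)^(k+1) := by
            rw [pow_succ]
            have : (0:ℝ) ≤ (((1+m:ℕ):ℝ)+1)^k := by positivity
            nlinarith [this]
          calc (((1+m:ℕ):ℝ)+1)^k * (((1+m:ℕ):ℝ) * r ^ m)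
              = ((((1+m:ℕ):ℝ)+1)^k * ((1+m:ℕ):ℝ)) * r ^ m := by ring
            _ ≤ (((1+m:ℕ):ℝ)+1)^(k+1) * r ^ m := by
                exact mul_le_mul_of_nonneg_right key (by positivity)
            _ = (((1+m:ℕ):ℝ)+1)^(k+1) * r^(1+m) * r⁻¹ := by
                have : r ^ (1+m) = r * r ^ m := by rw [pow_add, pow_one]
                rw [this]
                field_simp
                try ring
      calc |b n| * ((n:ℝ) * |y| ^ (n-1))
          ≤ (C * ((n:ℝ)+1)^k) * ((n:ℝ) * r ^ (n-1)) := by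
            apply mul_le_mul (hb n) ?_ (by positivity) (by positivity)
            exact mul_le_mul_of_nonneg_left h1 (Nat.cast_nonneg n)
        _ = C * (((n:ℝ)+1)^k * ((n:ℝ) * r ^ (n-1))) := by ring
        _ ≤ C * (((n:ℝ)+1)^(k+1) * r^n * r⁻¹) := mul_le_mul_of_nonneg_left h2 hCnn
        _ = (C * r⁻¹) * (((n:ℝ)+1)^(k+1) * r^n) := by ring
    · exact Set.mem_Ioo.2 ⟨by linarith [abs_nonneg x], by linarith [abs_nonneg x]⟩
    · apply summable_of_ne_finset_zero (s := {0})
      intro n hn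
      simp only [Finset.mem_singleton] at hn
      simp [zero_pow hn]
    · exact Set.mem_Ioo.2 ⟨neg_lt_of_abs_lt hxr, lt_of_abs_lt hxr⟩
  convert hmain using 1
  have hsum : Summable (fun n : ℕ => b n * ((n:ℝ) * x ^ (n-1))) := by
    rcases eq_or_ne x 0 with rfl | hx0
    · apply summable_of_ne_finset_zero (s := {0, 1})
      intro n hn
      simp only [Finset.mem_insert, Finset.mem_singleton] at hn
      push_neg at hn
      have : n - 1 ≠ 0 := by omega
      simp [zero_pow this]
    · have hb' : ∀ n : ℕ, |b n * (n:ℝ) / x| ≤ (C / |x|) * ((n:ℝ)+1)^(k+1) := by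
        intro n
        rw [abs_div, abs_mul, Nat.abs_cast, div_le_iff₀ (abs_pos.2 hx0)]
        calc |b n| * (n:ℝ) ≤ (C * ((n:ℝ)+1)^k) * ((n:ℝ)+1) := by
              apply mul_le_mul (hb n) (by linarith) (Nat.cast_nonneg n)
              have := abs_nonneg (b n); nlinarith [hb n, Nat.cast_nonneg (α := ℝ) n]
          _ = C * ((n:ℝ)+1)^(k+1) := by rw [pow_succ]; ring
          _ = C / |x| * ((n:ℝ)+1)^(k+1) * |x| := by field_simp
      refine (summable_coeff hb' hx).congr fun n => ?_
      rcases Nat.eq_zero_or_pos n with rfl | hn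
      · simp
      · obtain ⟨m, rfl⟩ := Nat.exists_eq_add_of_le hn
        simp only [Nat.add_sub_cancel_left]
        have : x ^ (Nat.succ 0 + m) = x * x ^ m := by
          rw [pow_add, pow_one]
        rw [this]
        field_simp
  rw [Summable.tsum_eq_zero_add hsum]
  simp only [Nat.cast_zero, zero_mul, mul_zero, zero_add]
  apply tsum_congr
  intro n
  push_cast [Nat.add_sub_cancel]
  ring

noncomputable def G (x : ℝ) : ℝ := ∑' n : ℕ, hc n * x ^ n
noncomputable def G1 (x : ℝ) : ℝ := ∑' n : ℕ, (hc (n+1) * ((n:ℝ)+1)) * x ^ n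
noncomputable def G2 (x : ℝ) : ℝ := ∑' n : ℕ, (hc (n+2) * ((n:ℝ)+2) * ((n:ℝ)+1)) * x ^ n

lemma hc_abs (n : ℕ) : |hc n| ≤ 1 := by
  rw [abs_of_pos (hc_pos n)]; exact hc_le_one n

lemma hcb0 : ∀ n : ℕ, |hc n| ≤ 1 * ((n:ℝ)+1)^0 := fun n => by simpa using hc_abs n

lemma hcb1 : ∀ n : ℕ, |hc (n+1) * ((n:ℝ)+1)| ≤ 1 * ((n:ℝ)+1)^1 := by
  intro n
  rw [abs_mul, abs_of_nonneg (by positivity : (0:ℝ) ≤ (n:ℝ)+1)]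
  have := hc_abs (n+1)
  have h0 : (0:ℝ) ≤ (n:ℝ)+1 := by positivity
  nlinarith [abs_nonneg (hc (n+1))]

lemma hcb2 : ∀ n : ℕ, |hc (n+2) * ((n:ℝ)+2) * ((n:ℝ)+1)| ≤ 2 * ((n:ℝ)+1)^2 := by
  intro n
  rw [abs_mul, abs_mul, abs_of_nonneg (by positivity : (0:ℝ) ≤ (n:ℝ)+2),
    abs_of_nonneg (by positivity : (0:ℝ) ≤ (n:ℝ)+1)]
  have := hc_abs (n+2)
  have h0 : (0:ℝ) ≤ (n:ℝ) := Nat.cast_nonneg n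
  nlinarith [abs_nonneg (hc (n+2))]

lemma hasDerivAt_G {x : ℝ} (hx : |x| < 1) : HasDerivAt G (G1 x) x := by
  have h := hasDerivAt_powser hcb0 hx
  exact h

lemma hasDerivAt_G1 {x : ℝ} (hx : |x| < 1) : HasDerivAt G1 (G2 x) x := by
  have h := hasDerivAt_powser hcb1 hx
  refine h.congr_deriv (Eq.symm ?_)
  unfold G2
  apply tsum_congr
  intro n
  push_cast
  ring

lemma G_zero : G 0 = 1 := by
  unfold G
  rw [tsum_eq_single 0 (fun n hn => by simp [zero_pow hn])]
  simp [hc_zero]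

lemma G_ode {x : ℝ} (hx : |x| < 1) :
    x*(1-x)*G2 x + (1/2 - 2*x)*G1 x - (2/9)*G x = 0 := by
  have S1 : Summable (fun n : ℕ => (hc (n+1) * ((n:ℝ)+1) * (n:ℝ)) * x ^ n) := by
    refine summable_coeff (C := 1) (k := 2) (fun n => ?_) hx
    rw [abs_mul, abs_mul, abs_of_nonneg (by positivity : (0:ℝ) ≤ (n:ℝ)+1), Nat.abs_cast]
    have := hc_abs (n+1)
    have h0 : (0:ℝ) ≤ (n:ℝ) := Nat.cast_nonneg n
    nlinarith [abs_nonneg (hc (n+1))]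
  have S2 : Summable (fun n : ℕ => (hc n * ((n:ℝ) * ((n:ℝ)-1))) * x ^ n) := by
    refine summable_coeff (C := 1) (k := 2) (fun n => ?_) hx
    rw [abs_mul]
    have := hc_abs n
    have h0 : (0:ℝ) ≤ (n:ℝ) := Nat.cast_nonneg n
    have hb : |(n:ℝ) * ((n:ℝ)-1)| ≤ ((n:ℝ)+1)^2 := by
      rw [abs_le]
      constructor <;> nlinarith
    nlinarith [abs_nonneg (hc n), abs_nonneg ((n:ℝ) * ((n:ℝ)-1))]
  have S3 : Summable (fun n : ℕ => (hc (n+1) * ((n:ℝ)+1)) * x ^ n) :=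
    summable_coeff hcb1 hx
  have S4 : Summable (fun n : ℕ => (hc n * (n:ℝ)) * x ^ n) := by
    refine summable_coeff (C := 1) (k := 1) (fun n => ?_) hx
    rw [abs_mul, Nat.abs_cast]
    have := hc_abs n
    have h0 : (0:ℝ) ≤ (n:ℝ) := Nat.cast_nonneg n
    nlinarith [abs_nonneg (hc n)]
  have S5 : Summable (fun n : ℕ => hc n * x ^ n) := summable_coeff hcb0 hx
  have S2' : Summable (fun n : ℕ => (hc (n+2) * ((n:ℝ)+2) * ((n:ℝ)+1)) * x ^ n) :=
    summable_coeff hcb2 hx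
  -- h1 : sum of S1 equals x * G2 x
  have h1 : HasSum (fun n : ℕ => (hc (n+1) * ((n:ℝ)+1) * (n:ℝ)) * x ^ n) (x * G2 x) := by
    have e : ∑' n : ℕ, (hc (n+1) * ((n:ℝ)+1) * (n:ℝ)) * x ^ n = x * G2 x := by
      rw [Summable.tsum_eq_zero_add S1]
      simp only [Nat.cast_zero, mul_zero, zero_mul, zero_add, pow_zero]
      unfold G2
      rw [← tsum_mul_left]
      apply tsum_congr
      intro n
      push_cast
      ring
    exact e ▸ S1.hasSum
  have h2 : HasSum (fun n : ℕ => (hc n * ((n:ℝ) * ((n:ℝ)-1))) * x ^ n) (x^2 * G2 x) := by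
    have e : ∑' n : ℕ, (hc n * ((n:ℝ) * ((n:ℝ)-1))) * x ^ n = x^2 * G2 x := by
      rw [Summable.tsum_eq_zero_add S2]
      have S2s : Summable (fun n : ℕ => (hc (n+1) * (((n:ℕ)+1:ℝ) * (((n:ℕ):ℝ)+1-1))) * x ^ (n+1)) := by
        refine ((summable_nat_add_iff 1).2 S2).congr fun n => ?_
        push_cast
        ring
      rw [show (fun n : ℕ => (hc (n+1) * ((((n:ℕ)+1:ℕ):ℝ) * ((((n:ℕ)+1:ℕ):ℝ)-1))) * x ^ (n+1))
          = (fun n : ℕ => (hc (n+1) * (((n:ℕ)+1:ℝ) * (((n:ℕ):ℝ)+1-1))) * x ^ (n+1)) from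
        funext fun n => by push_cast; ring]
      rw [Summable.tsum_eq_zero_add S2s]
      simp only [Nat.cast_zero, mul_zero, zero_mul, zero_add, pow_zero, mul_one, sub_self]
      unfold G2
      rw [← tsum_mul_left]
      apply tsum_congr
      intro n
      push_cast
      ring
    exact e ▸ S2.hasSum
  have h3 : HasSum (fun n : ℕ => (hc (n+1) * ((n:ℝ)+1)) * x ^ n) (G1 x) := S3.hasSum
  have h4 : HasSum (fun n : ℕ => (hc n * (n:ℝ)) * x ^ n) (x * G1 x) := by
    have e : ∑' n : ℕ, (hc n * (n:ℝ)) * x ^ n = x * G1 x := by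
      rw [Summable.tsum_eq_zero_add S4]
      simp only [Nat.cast_zero, mul_zero, zero_mul, zero_add]
      unfold G1
      rw [← tsum_mul_left]
      apply tsum_congr
      intro n
      push_cast
      ring
    exact e ▸ S4.hasSum
  have h5 : HasSum (fun n : ℕ => hc n * x ^ n) (G x) := S5.hasSum
  have total := ((h1.sub h2).add (h3.mul_left (1/2))).sub ((h4.mul_left 2).add (h5.mul_left (2/9)))
  have hzero : (fun n : ℕ => ((hc (n+1) * ((n:ℝ)+1) * (n:ℝ)) * x ^ n - (hc n * ((n:ℝ) * ((n:ℝ)-1))) * x ^ n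
      + 1/2 * ((hc (n+1) * ((n:ℝ)+1)) * x ^ n)) - (2 * ((hc n * (n:ℝ)) * x ^ n) + 2/9 * (hc n * x ^ n)))
      = (fun _ : ℕ => (0:ℝ)) := by
    funext n
    have hr := hc_rec n
    linear_combination x ^ n * hr
  rw [hzero] at total
  have : (x * G2 x - x^2 * G2 x + 1/2 * G1 x) - (2 * (x * G1 x) + 2/9 * G x) = 0 :=
    total.unique hasSum_zero
  linarith [this]

noncomputable def Y (t : ℝ) : ℝ := Real.cos t * G (Real.sin t ^ 2)
noncomputable def Y1 (t : ℝ) : ℝ :=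
  -Real.sin t * G (Real.sin t ^ 2) + 2 * Real.sin t * Real.cos t ^ 2 * G1 (Real.sin t ^ 2)

lemma hasDerivAt_sinsq (t : ℝ) :
    HasDerivAt (fun s => Real.sin s ^ 2) (2 * Real.sin t * Real.cos t) t := by
  have h := (Real.hasDerivAt_sin t).pow 2
  refine h.congr_deriv (Eq.symm ?_)
  push_cast
  ring

lemma hasDerivAt_Y {t : ℝ} (ht : Real.sin t ^ 2 < 1) : HasDerivAt Y (Y1 t) t := by
  have habs : |Real.sin t ^ 2| < 1 := by
    rw [abs_of_nonneg (sq_nonneg _)]; exact ht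
  have hG := (hasDerivAt_G habs).comp t (hasDerivAt_sinsq t)
  have h := (Real.hasDerivAt_cos t).mul hG
  refine h.congr_deriv (Eq.symm ?_)
  unfold Y1
  simp only [Function.comp]
  ring

lemma hasDerivAt_Y1 {t : ℝ} (ht : Real.sin t ^ 2 < 1) :
    HasDerivAt Y1 (-(1/9) * Y t) t := by
  have habs : |Real.sin t ^ 2| < 1 := by
    rw [abs_of_nonneg (sq_nonneg _)]; exact ht
  have hG := (hasDerivAt_G habs).comp t (hasDerivAt_sinsq t)
  have hG1 := (hasDerivAt_G1 habs).comp t (hasDerivAt_sinsq t)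
  have hterm1 := ((Real.hasDerivAt_sin t).neg.mul hG)
  have hsc : HasDerivAt (fun s => 2 * Real.sin s * Real.cos s ^ 2)
      (2 * Real.cos t * Real.cos t ^ 2 + 2 * Real.sin t * (2 * Real.cos t * (-Real.sin t))) t := by
    have h1 := (Real.hasDerivAt_sin t).const_mul 2
    have h2 := (Real.hasDerivAt_cos t).pow 2
    have := h1.mul h2
    refine this.congr_deriv (Eq.symm ?_)
    push_cast [Pi.pow_apply]
    ring
  have hterm2 := hsc.mul hG1
  have h := hterm1.add hterm2
  refine h.congr_deriv (Eq.symm ?_)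
  have ode := G_ode habs
  have pyth := Real.sin_sq_add_cos_sq t
  unfold Y
  simp only [Function.comp, Pi.neg_apply]
  linear_combination (-4 * Real.cos t) * ode + (2 * Real.cos t * G1 (Real.sin t ^ 2) - 4*Real.cos t*G1 (Real.sin t^2) - 4*Real.cos t*Real.sin t^2*G2 (Real.sin t^2)) * pyth

lemma Y_eq_cos {b : ℝ} (hb0 : 0 ≤ b) (hb : b < π/2) : Y b = Real.cos (b/3) := by
  -- energy function
  set F : ℝ → ℝ := fun t => 9*(Y1 t + 1/3 * Real.sin (t/3))^2 + (Y t - Real.cos (t/3))^2 with hF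
  have hsin : ∀ t ∈ Set.Icc 0 b, Real.sin t ^ 2 < 1 := by
    intro t ht
    have h1 : Real.cos t > 0 := Real.cos_pos_of_mem_Ioo
      ⟨by linarith [ht.1, pi_pos], lt_of_le_of_lt ht.2 hb⟩
    nlinarith [Real.sin_sq_add_cos_sq t]
  have hder : ∀ t ∈ Set.Icc 0 b, HasDerivAt F 0 t := by
    intro t ht
    have h1 := hasDerivAt_Y (hsin t ht)
    have h2 := hasDerivAt_Y1 (hsin t ht)
    have hs3 : HasDerivAt (fun u : ℝ => Real.sin (u/3)) (Real.cos (t/3) * (1/3)) t := by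
      have := (Real.hasDerivAt_sin (t/3)).comp t ((hasDerivAt_id t).div_const 3)
      simpa [Function.comp_def] using this
    have hc3 : HasDerivAt (fun u : ℝ => Real.cos (u/3)) (-Real.sin (t/3) * (1/3)) t := by
      have := (Real.hasDerivAt_cos (t/3)).comp t ((hasDerivAt_id t).div_const 3)
      simpa [Function.comp_def] using this
    have hd : HasDerivAt F
        (9*(2*(Y1 t + 1/3 * Real.sin (t/3))*((-(1/9) * Y t) + 1/3 * (Real.cos (t/3) * (1/3))))
          + 2*(Y t - Real.cos (t/3))*(Y1 t - (-Real.sin (t/3) * (1/3)))) t := by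
      have e1 : HasDerivAt (fun u => Y1 u + 1/3 * Real.sin (u/3))
          ((-(1/9) * Y t) + 1/3 * (Real.cos (t/3) * (1/3))) t := h2.add (hs3.const_mul _)
      have e2 : HasDerivAt (fun u => (Y1 u + 1/3 * Real.sin (u/3))^2)
          (2*(Y1 t + 1/3 * Real.sin (t/3))*((-(1/9) * Y t) + 1/3 * (Real.cos (t/3) * (1/3)))) t := by
        have := e1.pow 2
        refine this.congr_deriv (Eq.symm ?_)
        push_cast
        ring
      have e3 : HasDerivAt (fun u => Y u - Real.cos (u/3)) (Y1 t - (-Real.sin (t/3) * (1/3))) t :=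
        h1.sub hc3
      have e4 : HasDerivAt (fun u => (Y u - Real.cos (u/3))^2)
          (2*(Y t - Real.cos (t/3))*(Y1 t - (-Real.sin (t/3) * (1/3)))) t := by
        have := e3.pow 2
        refine this.congr_deriv (Eq.symm ?_)
        push_cast
        ring
      exact (e2.const_mul 9).add e4
    convert hd using 1
    ring
  have hcont : ContinuousOn F (Set.Icc 0 b) := fun t ht => (hder t ht).continuousAt.continuousWithinAt
  have hconst := constant_of_has_deriv_right_zero hcont
    (fun t ht => ((hder t (Set.mem_Icc.2 ⟨ht.1, ht.2.le⟩)).hasDerivWithinAt))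
  have hFb : F b = F 0 := hconst b (Set.mem_Icc.2 ⟨hb0, le_refl b⟩)
  have hY0 : Y 0 = 1 := by unfold Y; simp [G_zero]
  have hY10 : Y1 0 = 0 := by unfold Y1; simp
  have hF0 : F 0 = 0 := by rw [hF]; simp [hY0, hY10]
  rw [hF0] at hFb
  have h1 : (Y b - Real.cos (b/3))^2 ≤ 0 := by
    have : 9*(Y1 b + 1/3 * Real.sin (b/3))^2 ≥ 0 := by positivity
    simp only [hF] at hFb
    nlinarith
  nlinarith [sq_nonneg (Y b - Real.cos (b/3))]

lemma G_cubic {x : ℝ} (hx0 : 0 ≤ x) (hx1 : x < 1) :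
    4*(1-x)*(G x)^3 = 3*(G x) + 1 := by
  set θ := Real.arcsin (Real.sqrt x) with hθ
  have hs01 : Real.sqrt x < 1 := by
    rw [show (1:ℝ) = Real.sqrt 1 from (Real.sqrt_one).symm]
    exact Real.sqrt_lt_sqrt hx0 hx1
  have hθ0 : 0 ≤ θ := Real.arcsin_nonneg.2 (Real.sqrt_nonneg x)
  have hθb : θ < π/2 := Real.arcsin_lt_pi_div_two.2 hs01
  have hsin : Real.sin θ = Real.sqrt x :=
    Real.sin_arcsin (by linarith [Real.sqrt_nonneg x]) hs01.le
  have hsin2 : Real.sin θ ^ 2 = x := by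
    rw [hsin, Real.sq_sqrt hx0]
  have hcos : Real.cos θ = Real.sqrt (1-x) := by
    rw [hθ, Real.cos_arcsin, Real.sq_sqrt hx0]
  have hcos0 : 0 < Real.cos θ := by
    rw [hcos]; exact Real.sqrt_pos.2 (by linarith)
  have hY := Y_eq_cos hθ0 hθb
  unfold Y at hY
  rw [hsin2] at hY
  have hcos2 : Real.cos θ ^ 2 = 1 - x := by
    rw [hcos, Real.sq_sqrt (by linarith : (0:ℝ) ≤ 1-x)]
  have htriple : Real.cos θ = 4 * Real.cos (θ/3) ^ 3 - 3 * Real.cos (θ/3) := by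
    have := Real.cos_three_mul (θ/3)
    rw [show 3 * (θ/3) = θ by ring] at this
    linarith
  rw [← hY] at htriple
  have key : Real.cos θ * (4*(1-x)*(G x)^3 - (3*(G x) + 1)) = 0 := by
    linear_combination (-1) * htriple - (4*Real.cos θ*(G x)^3) * hcos2
  rcases mul_eq_zero.1 key with h | h
  · exact absurd h hcos0.ne'
  · linarith

/-- The Gauss hypergeometric series `F(a,b;c;x) = ∑ (a)_n (b)_n / ((c)_n n!) xⁿ`. -/
noncomputable def hyperF (a b c x : ℝ) : ℝ :=
  ∑' n : ℕ, ((ascPochhammer ℝ n).eval a * (ascPochhammer ℝ n).eval b /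
    ((ascPochhammer ℝ n).eval c * (n.factorial : ℝ))) * x ^ n

lemma hyperF_eq_G (x : ℝ) : hyperF (1/3) (2/3) (1/2) x = G x := rfl

theorem stmt_3 (κ : ℝ) (hκ : κ ∈ Set.Ioo (0 : ℝ) 1) (φ : ℝ → ℝ)
    (hφ : Differentiable ℝ φ) (hφ' : Differentiable ℝ (deriv φ)) (hφ0 : φ 0 = 0)
    (hinv : ∀ u : ℝ, deriv φ u * hyperF (1/3) (2/3) (1/2) (κ ^ 2 * sin (φ u) ^ 2) = 1)
    (u : ℝ) (hu : deriv φ u ≠ 1)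
    (d d' p q g₂ g₃ : ℝ)
    (hd : d = deriv φ u) (hd' : d' = deriv (deriv φ) u)
    (hp : p = (4/9) * κ ^ 2 / (1 - d) - 1/3)
    (hq : q = (4/9) * κ ^ 2 * d' / (1 - d) ^ 2)
    (hg₂ : g₂ = (4/27) * (9 - 8 * κ ^ 2))
    (hg₃ : g₃ = (8/729) * (8 * κ ^ 4 - 36 * κ ^ 2 + 27)) :
    q ^ 2 = 4 * p ^ 3 - g₂ * p - g₃ := by
  obtain ⟨hκ0, hκ1⟩ := hκ
  -- the argument is in [0,1)
  have hX : ∀ v : ℝ, 0 ≤ κ ^ 2 * sin (φ v) ^ 2 ∧ κ ^ 2 * sin (φ v) ^ 2 < 1 := by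
    intro v
    constructor
    · positivity
    · have h1 : sin (φ v) ^ 2 ≤ 1 := sin_sq_le_one (φ v)
      nlinarith
  -- pointwise cubic for the derivative
  have hcurve : ∀ v : ℝ, (deriv φ v) ^ 3 + 3 * (deriv φ v) ^ 2
      = 4 - 4 * (κ ^ 2 * sin (φ v) ^ 2) := by
    intro v
    obtain ⟨h0, h1⟩ := hX v
    have hcub := G_cubic h0 h1
    have hv := hinv v
    rw [hyperF_eq_G] at hv
    set D := deriv φ v
    set g := G (κ ^ 2 * sin (φ v) ^ 2)
    have hD0 : D ≠ 0 := by
      intro h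
      rw [h, zero_mul] at hv
      exact zero_ne_one hv
    have hg : g = 1 / D := by field_simp; linarith [hv]
    rw [hg] at hcub
    field_simp at hcub
    apply mul_left_cancel₀ hD0
    linear_combination (-D) * hcub
  -- derivative of the cubic identity
  have hDdiff : DifferentiableAt ℝ (deriv φ) u := hφ'.differentiableAt
  have hL : HasDerivAt (fun v => (deriv φ v) ^ 3 + 3 * (deriv φ v) ^ 2)
      (3 * (deriv φ u) ^ 2 * deriv (deriv φ) u + 3 * (2 * deriv φ u * deriv (deriv φ) u)) u := by
    have h1 := (hDdiff.hasDerivAt.pow 3)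
    have h2 := (hDdiff.hasDerivAt.pow 2).const_mul 3
    have := h1.add h2
    refine this.congr_deriv (Eq.symm ?_)
    push_cast
    ring
  have hR : HasDerivAt (fun v => 4 - 4 * (κ ^ 2 * sin (φ v) ^ 2))
      (-(4 * κ ^ 2) * (2 * sin (φ u) * cos (φ u) * deriv φ u)) u := by
    have hsin : HasDerivAt (fun v => sin (φ v) ^ 2)
        (2 * sin (φ u) * cos (φ u) * deriv φ u) u := by
      have h1 := (Real.hasDerivAt_sin (φ u)).comp u (hφ.differentiableAt.hasDerivAt)
      have h2 := h1.pow 2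
      refine h2.congr_deriv (Eq.symm ?_)
      push_cast
      simp only [Function.comp]
      ring
    have h3 := ((hsin.const_mul (4 * κ ^ 2)).const_sub 4)
    have hfe : (fun v => 4 - 4 * (κ ^ 2 * sin (φ v) ^ 2)) = (fun v => 4 - 4 * κ ^ 2 * sin (φ v) ^ 2) := by
      funext v; ring
    rw [hfe]
    refine h3.congr_deriv (Eq.symm ?_)
    ring
  have heq : (fun v => (deriv φ v) ^ 3 + 3 * (deriv φ v) ^ 2)
      = (fun v => 4 - 4 * (κ ^ 2 * sin (φ v) ^ 2)) := funext hcurve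
  have hder := (heq ▸ hL).unique hR
  -- set up notation
  set s := sin (φ u) with hs
  set c := cos (φ u) with hc'
  rw [← hd, ← hd'] at hder
  have E1 : d ^ 3 + 3 * d ^ 2 = 4 - 4 * (κ ^ 2 * s ^ 2) := by
    rw [hd]; exact hcurve u
  have hd0 : d ≠ 0 := by
    intro h
    have hv := hinv u
    rw [← hd, h, zero_mul] at hv
    exact zero_ne_one hv
  have hd1 : 1 - d ≠ 0 := by
    intro h
    apply hu
    rw [← hd]; linarith [h]
  -- d ≠ -2
  have hd2 : d + 2 ≠ 0 := by
    intro h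
    have hdm2 : d = -2 := by linarith
    rw [hdm2] at E1
    have hs0 : κ ^ 2 * s ^ 2 = 0 := by nlinarith
    have hv := hinv u
    rw [hyperF_eq_G, ← hs, hs0, G_zero, mul_one, ← hd, hdm2] at hv
    norm_num at hv
  -- first order ODE
  have E2 : 3 * (d + 2) * d' = -(8 * κ ^ 2 * s * c) := by
    have : d * (3 * (d + 2) * d' + 8 * κ ^ 2 * s * c) = 0 := by
      linear_combination hder
    rcases mul_eq_zero.1 this with h | h
    · exact absurd h hd0
    · linarith
  have pyth : s ^ 2 + c ^ 2 = 1 := sin_sq_add_cos_sq (φ u)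
  -- squared relation
  have h9 : 9 * (d + 2) ^ 2 * d' ^ 2 = 64 * κ ^ 4 * s ^ 2 * c ^ 2 := by
    linear_combination (3 * (d + 2) * d' - 8 * κ ^ 2 * s * c) * E2
  have E3' : 9 * (d + 2) ^ 2 * d' ^ 2
      = (d + 2) ^ 2 * (4 * (1 - d) * (4 * κ ^ 2 - (1 - d) * (2 + d) ^ 2)) := by
    have hc2 : c ^ 2 = 1 - s ^ 2 := by linarith
    rw [h9, hc2]
    linear_combination (16 * κ ^ 2 - 64 * κ ^ 2 * s ^ 2 - 4 * (4 - d^3 - 3*d^2) + 48 * κ ^ 2 * s ^ 2) * E1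
  have E3 : d' ^ 2 = (4/9) * ((1 - d) * (4 * κ ^ 2 - (1 - d) * (2 + d) ^ 2)) := by
    have h22 : ((d + 2) ^ 2 : ℝ) ≠ 0 := pow_ne_zero 2 hd2
    field_simp at E3'
    apply mul_left_cancel₀ (show (9 : ℝ) * (d + 2) ^ 2 ≠ 0 by positivity)
    linear_combination (d + 2) ^ 2 * E3'
  -- final algebra
  have target2 : q ^ 2 = (64/729) * κ ^ 4 * (4 * κ ^ 2 - (1 - d) * (2 + d) ^ 2) / (1 - d) ^ 3 := by
    calc q ^ 2 = (16/81 * κ ^ 4 / (1 - d) ^ 4) * d' ^ 2 := by rw [hq]; field_simp; ring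
      _ = (16/81 * κ ^ 4 / (1 - d) ^ 4) * ((4/9) * ((1 - d) * (4 * κ ^ 2 - (1 - d) * (2 + d) ^ 2))) := by
          rw [E3]
      _ = (64/729) * κ ^ 4 * (4 * κ ^ 2 - (1 - d) * (2 + d) ^ 2) / (1 - d) ^ 3 := by
          field_simp
          ring
  have target3 : 4 * p ^ 3 - g₂ * p - g₃
      = (64/729) * κ ^ 4 * (4 * κ ^ 2 - (1 - d) * (2 + d) ^ 2) / (1 - d) ^ 3 := by
    rw [hp, hg₂, hg₃]
    field_simp
    ring
  rw [target2, target3]
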